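/- Let a_1,…,a_r be orthonormal vectors in ℝ^d, γ > 0, m ≥ r, f̃_j(x) = a_j^T x + (1 − j/m)γ, and suppose 2kδ < γ/m. Fix i ∈ [r] and a point x_i with a_i^T x_i ≥ 0 and a_j^T x_i = 0 for all j > i. Then for every x with ‖x − x_i‖ ≤ kδ, the argmax of j ↦ f̃_j(x) over j ∈ [r] is attained only at indices j ≤ i; i.e. max_{j ≤ i} f̃_j(x) > max_{j > i} f̃_j(x). -/

import Mathlib

/-- The `j`-th affine piece `f̃_j(x) = a_jᵀ x + (1 - j/m)γ` (`j` running over `1,…,r`). -/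
noncomputable def ftilPiece {d : ℕ} {r : ℕ} (m : ℕ) (γ : ℝ)
    (a : Fin r → EuclideanSpace ℝ (Fin d)) (j : Fin r)
    (x : EuclideanSpace ℝ (Fin d)) : ℝ :=
  (inner ℝ (a j) x : ℝ) + (1 - ((j : ℕ) + 1) / m) * γ

/-!
Each piece `x ↦ ⟪a_j, x⟫` is 1-Lipschitz, so moving from `x_i` to `x` raises a later piece
`j > i` (which vanishes at `x_i`) and lowers piece `i` (nonnegative at `x_i`) by at most
`‖x - x_i‖` each, whereas the offsets already favour piece `i` by `(j - i)γ/m ≥ γ/m > 2‖x - x_i‖`.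
-/

open RealInnerProductSpace

lemma real_inner_le_inner_add_norm_sub {E : Type*} [NormedAddCommGroup E] [InnerProductSpace ℝ E]
    {u : E} (hu : ‖u‖ = 1) (x y : E) : ⟪u, x⟫ ≤ ⟪u, y⟫ + ‖x - y‖ := by
  have h := real_inner_le_norm u (x - y)
  rw [inner_sub_right, hu, one_mul] at h
  linarith

lemma ftilPiece_sub_ftilPiece {d r m : ℕ} (γ : ℝ) (a : Fin r → EuclideanSpace ℝ (Fin d))
    (i j : Fin r) (x : EuclideanSpace ℝ (Fin d)) :
    ftilPiece m γ a j x - ftilPiece m γ a i x =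
      ⟪a j, x⟫ - ⟪a i, x⟫ - ((j : ℝ) - i) * (γ / m) := by
  unfold ftilPiece
  ring

lemma ftilPiece_lt_of_lt {d r m : ℕ} {γ : ℝ} {a : Fin r → EuclideanSpace ℝ (Fin d)}
    (ha : ∀ l, ‖a l‖ = 1) {i j : Fin r} (hij : i < j) {xi x : EuclideanSpace ℝ (Fin d)}
    (hpos : 0 ≤ ⟪a i, xi⟫) (horth : ⟪a j, xi⟫ = 0) (hx : 2 * ‖x - xi‖ < γ / m) :
    ftilPiece m γ a j x < ftilPiece m γ a i x := by
  have hi : ⟪a i, xi⟫ ≤ ⟪a i, x⟫ + ‖x - xi‖ := by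
    simpa only [norm_sub_rev] using real_inner_le_inner_add_norm_sub (ha i) xi x
  have hj : ⟪a j, x⟫ ≤ ⟪a j, xi⟫ + ‖x - xi‖ := real_inner_le_inner_add_norm_sub (ha j) x xi
  have hgap : γ / m ≤ ((j : ℝ) - i) * (γ / m) := by
    have hji : (1 : ℝ) ≤ (j : ℝ) - i := by
      have : (i : ℕ) + 1 ≤ j := hij
      rw [le_sub_iff_add_le']
      exact_mod_cast this
    exact le_mul_of_one_le_left (by linarith [norm_nonneg (x - xi)]) hji
  have := ftilPiece_sub_ftilPiece (m := m) γ a i j x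
  linarith

theorem stmt12_general (d r m k : ℕ) (γ δ : ℝ)
    (hkδ : 2 * k * δ < γ / m)
    (a : Fin r → EuclideanSpace ℝ (Fin d)) (ha : Orthonormal ℝ a)
    (i : Fin r) (xi : EuclideanSpace ℝ (Fin d))
    (hpos : 0 ≤ (inner ℝ (a i) xi : ℝ))
    (horth : ∀ j, i < j → (inner ℝ (a j) xi : ℝ) = 0) :
    ∀ x : EuclideanSpace ℝ (Fin d), ‖x - xi‖ ≤ k * δ →
      ∀ j, i < j → ∃ j' ≤ i, ftilPiece m γ a j x < ftilPiece m γ a j' x :=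
  fun _ hx j hij =>
    ⟨i, le_rfl, ftilPiece_lt_of_lt ha.1 hij hpos (horth j hij) (by linarith)⟩

/-- Near a query point `x_i` (orthogonal to all later `a_j` and with `a_iᵀx_i ≥ 0`),
the maximum of the shifted affine pieces is attained only among the first `i` pieces:
every later piece is strictly dominated by some piece with index `≤ i`,
throughout the ball of radius `kδ`. -/
theorem stmt12 (d r m k : ℕ) (hr : 0 < r) (hm : r ≤ m) (γ δ : ℝ) (hγ : 0 < γ) (hδ : 0 ≤ δ)
    (hkδ : 2 * k * δ < γ / m)
    (a : Fin r → EuclideanSpace ℝ (Fin d)) (ha : Orthonormal ℝ a)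
    (i : Fin r) (xi : EuclideanSpace ℝ (Fin d))
    (hpos : 0 ≤ (inner ℝ (a i) xi : ℝ))
    (horth : ∀ j, i < j → (inner ℝ (a j) xi : ℝ) = 0) :
    ∀ x : EuclideanSpace ℝ (Fin d), ‖x - xi‖ ≤ k * δ →
      ∀ j, i < j → ∃ j' ≤ i, ftilPiece m γ a j x < ftilPiece m γ a j' x :=
  stmt12_general d r m k γ δ hkδ a ha i xi hpos horth
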